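/- Let k be an algebraically closed field of characteristic p. The number of elements λ ∈ k with λ ≠ 0, λ ≠ 1 and Φ_a(λ) = 0 (the a-supersingular λ-values) equals min(α·(m−a4), α·a3) − max(α(a2+a3−m), 0) − max(α(a1+a3−m), 0), and this number is strictly positive. -/

import Mathlib

/-!
Over `k`, `Φ_a` is a unit times `F = ∑_{j ≤ n} C(A, n - j) C(B, j) X^j` with `A = α a2*`,
`B = α a4*`, `n = α a3`, all below `p`. This `F` solves a hypergeometric differential equation
`X(1 - X)F'' + (a + bX)F' + cF = 0`. At a point other than `0, 1` the equation expresses each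
derivative through the two preceding ones, so a double root there would be a root of every
derivative; as `deg F < p` this forces `F = 0`. Hence the roots off `{0, 1}` are simple and
their number is `deg F = min(B, n)` minus the multiplicities at `0` and `1`, read off the Taylor
coefficients: `n - A` at `0`, and `A + B + 1 - p` at `1`, where the coefficients are
`C(B, i) C(A + B - i, n - i)` and `(1 + X)^(p + r) = (1 + X^p)(1 + X)^r` kills the first ones.
-/

open Polynomial

/-- The `a`-Hasse invariant `Φ_a ∈ 𝔽_p[λ]` of a type `a = (a1, a2, a3, a4)` in the mixed case:
`Φ_a(λ) = (-1)^(α a3) ∑_{i+j = α a3} C(α a2*, i) C(α a4*, j) λ^j` where `α = (p-1)/m` and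
`a_i* = m - a_i`. -/
noncomputable def HasseInv (p m a2 a3 a4 : ℕ) : Polynomial (ZMod p) :=
  let α := (p - 1) / m
  C ((-1 : ZMod p) ^ (α * a3)) *
    ∑ j ∈ Finset.range (α * a3 + 1),
      C ((Nat.choose (α * (m - a2)) (α * a3 - j) * Nat.choose (α * (m - a4)) j : ℕ) : ZMod p) *
        X ^ j

open Finset

section Hypergeometric
variable {R : Type*} [CommRing R]

-- Gauss's equation for `₂F₁(α, β; γ; X)` reads
-- `hypergeometricOp γ (-(α + β + 1)) (-(α * β)) F = 0`.
noncomputable def hypergeometricOp (a b c : R) (F : R[X]) : R[X] :=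
  X * (1 - X) * derivative (derivative F) + (C a + C b * X) * derivative F + C c * F

lemma derivative_hypergeometricOp (a b c : R) (F : R[X]) :
    derivative (hypergeometricOp a b c F) =
      hypergeometricOp (a + 1) (b - 2) (b + c) (derivative F) := by
  simp only [hypergeometricOp, derivative_mul, derivative_X, derivative_C, derivative_one, map_add,
    map_sub, map_one, map_ofNat]
  ring

lemma exists_hypergeometricOp_iterate_derivative_eq_zero {a b c : R} {F : R[X]}
    (h : hypergeometricOp a b c F = 0) (i : ℕ) :
    ∃ a b c : R, hypergeometricOp a b c (derivative^[i] F) = 0 := by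
  induction i with
  | zero => exact ⟨a, b, c, h⟩
  | succ i ih =>
    obtain ⟨a, b, c, hi⟩ := ih
    refine ⟨a + 1, b - 2, b + c, ?_⟩
    rw [Function.iterate_succ_apply', ← derivative_hypergeometricOp, hi, derivative_zero]

lemma coeff_hypergeometricOp (a b c : R) (F : R[X]) (j : ℕ) :
    (hypergeometricOp a b c F).coeff j =
      (j + 1) * (j + a) * F.coeff (j + 1) + (b * j - j * (j - 1) + c) * F.coeff j := by
  have : hypergeometricOp a b c F = X * derivative (derivative F) -
      X * (X * derivative (derivative F)) + C a * derivative F + C b * (X * derivative F) +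
      C c * F := by
    rw [hypergeometricOp]; ring
  rw [this]
  rcases j with _ | _ | j
  · simp [coeff_derivative]
  all_goals
    simp only [coeff_add, coeff_sub, coeff_C_mul, coeff_X_mul, coeff_derivative, mul_coeff_zero,
      coeff_X_zero]
    push_cast
    ring

variable [IsDomain R]

lemma isRoot_iterate_derivative_of_hypergeometricOp_eq_zero {a b c : R} {F : R[X]}
    (h : hypergeometricOp a b c F = 0) {x : R} (hx0 : x ≠ 0) (hx1 : x ≠ 1)
    (h0 : F.IsRoot x) (h1 : (derivative F).IsRoot x) (i : ℕ) :
    (derivative^[i] F).IsRoot x := by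
  suffices ∀ i, (derivative^[i] F).IsRoot x ∧ (derivative^[i + 1] F).IsRoot x from (this i).1
  intro i
  induction i with
  | zero => exact ⟨h0, h1⟩
  | succ i ih =>
    obtain ⟨a, b, c, hi⟩ := exists_hypergeometricOp_iterate_derivative_eq_zero h i
    -- `x` is not a singular point of the equation
    have hx : x * (1 - x) ≠ 0 := mul_ne_zero hx0 (sub_ne_zero.mpr hx1.symm)
    have := congrArg (eval x) hi
    simp only [hypergeometricOp, eval_add, eval_mul, eval_sub, eval_X, eval_one, eval_C,
      ih.1.eq_zero, ← Function.iterate_succ_apply' derivative, ih.2.eq_zero, mul_zero, add_zero,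
      eval_zero, mul_eq_zero, hx, false_or] at this
    exact ⟨ih.2, this⟩

lemma rootMultiplicity_le_natDegree (F : R[X]) (x : R) : rootMultiplicity x F ≤ F.natDegree := by
  classical
  exact count_roots F ▸ (Multiset.count_le_card _ _).trans (card_roots' F)

theorem rootMultiplicity_le_one_of_hypergeometricOp_eq_zero {a b c : R} {F : R[X]}
    (hF : F ≠ 0) (hdeg : (F.natDegree.factorial : R) ≠ 0) (h : hypergeometricOp a b c F = 0)
    {x : R} (hx0 : x ≠ 0) (hx1 : x ≠ 1) : rootMultiplicity x F ≤ 1 := by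
  by_contra! hx
  have hroot := isRoot_iterate_derivative_of_hypergeometricOp_eq_zero h hx0 hx1
    (isRoot_iterate_derivative_of_lt_rootMultiplicity (n := 0) (by omega))
    (isRoot_iterate_derivative_of_lt_rootMultiplicity (n := 1) hx)
  exact (lt_rootMultiplicity_of_isRoot_iterate_derivative_of_mem_nonZeroDivisors hF
    (fun m _ ↦ hroot m) (mem_nonZeroDivisors_of_ne_zero hdeg)).not_ge
    (rootMultiplicity_le_natDegree F x)

end Hypergeometric

lemma rootMultiplicity_eq_of_coeff_taylor {R : Type*} [CommRing R] {F : R[X]} {r : R} {t : ℕ}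
    (h0 : ∀ i < t, (taylor r F).coeff i = 0) (ht : (taylor r F).coeff t ≠ 0) :
    rootMultiplicity r F = t := by
  rw [rootMultiplicity_eq_natTrailingDegree, ← taylor_apply]
  exact le_antisymm (natTrailingDegree_le_of_ne_zero ht)
    (le_natTrailingDegree (fun h ↦ ht (by simp [h])) h0)

lemma Multiset.card_eq_count_add_count_add_card_filter {α : Type*} [DecidableEq α] {a b : α}
    (hab : a ≠ b) (s : Multiset α) :
    card s = count a s + count b s + card (s.filter fun x ↦ x ≠ a ∧ x ≠ b) := by
  induction s using Multiset.induction_on with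
  | empty => simp
  | cons x s ih =>
    rw [Multiset.card_cons, ih, Multiset.filter_cons, Multiset.count_cons, Multiset.count_cons]
    split_ifs <;> simp_all [eq_comm] <;> omega

theorem ncard_setOf_isRoot_add_rootMultiplicity {k : Type*} [Field k] [IsAlgClosed k]
    {F : k[X]} (hF : F ≠ 0) (hsimple : ∀ x, x ≠ 0 → x ≠ 1 → rootMultiplicity x F ≤ 1) :
    {x | x ≠ 0 ∧ x ≠ 1 ∧ F.IsRoot x}.ncard + rootMultiplicity 0 F + rootMultiplicity 1 F =
      F.natDegree := by
  classical
  set S := F.roots.filter fun x ↦ x ≠ 0 ∧ x ≠ 1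
  have hS : S.Nodup := Multiset.nodup_iff_count_le_one.mpr fun x ↦ by
    rw [Multiset.count_filter, count_roots]
    split_ifs with hx
    exacts [hsimple x hx.1 hx.2, zero_le_one]
  have hset : {x | x ≠ 0 ∧ x ≠ 1 ∧ F.IsRoot x} = ↑S.toFinset := by
    ext x
    simp only [S, Set.mem_ofPred_eq, IsRoot.def, Multiset.toFinset_filter, coe_filter,
      Multiset.mem_toFinset, mem_roots hF]
    tauto
  rw [hset, Set.ncard_coe_finset, Multiset.toFinset_card_of_nodup hS, ← count_roots,
    ← count_roots, ← IsAlgClosed.card_roots_eq_natDegree,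
    Multiset.card_eq_count_add_count_add_card_filter zero_ne_one F.roots]
  ring

lemma Nat.cast_choose_succ_mul {R : Type*} [CommRing R] (a i : ℕ) :
    (a.choose (i + 1) : R) * (i + 1) = a.choose i * ((a : R) - i) := by
  rcases le_or_gt i a with h | h
  · have := congrArg (Nat.cast : ℕ → R) (Nat.choose_succ_right_eq a i)
    push_cast [Nat.cast_sub h] at this
    exact this
  · simp [Nat.choose_eq_zero_of_lt h, Nat.choose_eq_zero_of_lt (h.trans (Nat.lt_succ_self i))]

section CharP
variable {R : Type*} [CommRing R] {p : ℕ} [Fact p.Prime] [CharP R p]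

lemma cast_choose_ne_zero_of_lt {y x : ℕ} (hy : y < p) (hx : x ≤ y) :
    (y.choose x : R) ≠ 0 := by
  rw [Ne, CharP.cast_eq_zero_iff R p]
  exact (Nat.Prime.coprime_iff_not_dvd Fact.out).mp
    (Nat.Prime.coprime_choose_of_lt Fact.out hy hx)

lemma cast_factorial_ne_zero_of_lt {n : ℕ} (hn : n < p) : (n.factorial : R) ≠ 0 := by
  rw [Ne, CharP.cast_eq_zero_iff R p, Nat.Prime.dvd_factorial Fact.out]
  omega

lemma cast_add_choose_of_lt (r : ℕ) {s : ℕ} (hs : s < p) :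
    ((p + r).choose s : R) = r.choose s := by
  have h : (X + 1 : R[X]) ^ (p + r) = (X ^ p + 1) * (X + 1) ^ r := by
    rw [pow_add, add_pow_char, one_pow]
  simpa [coeff_X_add_one_pow, add_mul, coeff_X_pow_mul', hs.not_ge] using congrArg (coeff · s) h
end CharP


lemma sum_range_choose_mul_choose_mul_choose (A B n : ℕ) {i : ℕ} (hin : i ≤ n) :
    ∑ j ∈ range (n + 1), A.choose (n - j) * B.choose j * j.choose i
      = B.choose i * (A + (B - i)).choose (n - i) := by
  rw [← sum_range_add_sum_Ico _ (by omega : i ≤ n + 1), sum_Ico_eq_sum_range,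
    sum_eq_zero fun j hj ↦ by rw [Nat.choose_eq_zero_of_lt (mem_range.mp hj), mul_zero], zero_add,
    Nat.add_choose_eq, ← Nat.sum_antidiagonal_swap]
  simp only [Prod.fst_swap, Prod.snd_swap]
  rw [Nat.sum_antidiagonal_eq_sum_range_succ (fun u v ↦ A.choose v * (B - i).choose u), mul_sum,
    (by omega : n + 1 - i = n - i + 1)]
  refine sum_congr rfl fun j _ ↦ ?_
  rw [mul_assoc, Nat.choose_mul (Nat.le_add_right i j), Nat.add_sub_cancel_left,
    (by omega : n - (i + j) = n - i - j)]
  ring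

-- The coefficient of `t ^ n` in `(1 + t) ^ A * (1 + X * t) ^ B`.
noncomputable def choosePoly (R : Type*) [Semiring R] (A B n : ℕ) : R[X] :=
  ∑ j ∈ range (n + 1), C ((A.choose (n - j) * B.choose j : ℕ) : R) * X ^ j

section choosePoly
variable {R : Type*} [CommRing R] {A B n : ℕ}

lemma coeff_choosePoly (A B n j : ℕ) :
    (choosePoly R A B n).coeff j =
      if j ≤ n then ((A.choose (n - j) * B.choose j : ℕ) : R) else 0 := by
  rw [choosePoly, finsetSum_coeff]
  simp only [coeff_C_mul, coeff_X_pow, mul_ite, mul_one, mul_zero, sum_ite_eq, mem_range,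
    Nat.lt_succ_iff]

lemma coeff_choosePoly_succ_mul (A B n j : ℕ) :
    ((j : R) + 1) * (j + (A - n + 1)) * (choosePoly R A B n).coeff (j + 1) =
      ((n : R) - j) * (B - j) * (choosePoly R A B n).coeff j := by
  simp only [coeff_choosePoly]
  obtain hj | rfl | hj := lt_trichotomy j n
  · obtain ⟨s, rfl⟩ := Nat.exists_eq_add_of_lt hj
    rw [if_pos (by omega), if_pos (by omega), (by omega : j + s + 1 - (j + 1) = s),
      (by omega : j + s + 1 - j = s + 1)]
    have hA := Nat.cast_choose_succ_mul (R := R) A s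
    have hB := Nat.cast_choose_succ_mul (R := R) B j
    push_cast at hA hB ⊢
    linear_combination ((j : R) + (A - (j + s + 1) + 1)) * (A.choose s : R) * hB
      - ((B : R) - j) * (B.choose j : R) * hA
  · simp
  · rw [if_neg (by omega), if_neg (by omega), mul_zero, mul_zero]

lemma hypergeometricOp_choosePoly (A B n : ℕ) :
    hypergeometricOp ((A : R) - n + 1) (n + B - 1) (-(n * B)) (choosePoly R A B n) = 0 := by
  ext j
  rw [coeff_hypergeometricOp, coeff_zero]
  linear_combination coeff_choosePoly_succ_mul (R := R) A B n j

lemma taylor_one_coeff_choosePoly (A B n i : ℕ) :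
    (taylor 1 (choosePoly R A B n)).coeff i =
      ((∑ j ∈ range (n + 1), A.choose (n - j) * B.choose j * j.choose i : ℕ) : R) := by
  rw [taylor_coeff, choosePoly, map_sum, eval_finsetSum]
  push_cast
  refine sum_congr rfl fun j _ ↦ ?_
  rw [C_mul_X_pow_eq_monomial, hasseDeriv_monomial, eval_monomial, one_pow, mul_one]
  ring

variable [IsDomain R] {p : ℕ} [Fact p.Prime] [CharP R p]

lemma coeff_choosePoly_ne_zero (hA : A < p) (hB : B < p) {j : ℕ} (hj : j ≤ n)
    (hjA : n - j ≤ A) (hjB : j ≤ B) : (choosePoly R A B n).coeff j ≠ 0 := by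
  rw [coeff_choosePoly, if_pos hj, Nat.cast_mul]
  exact mul_ne_zero (cast_choose_ne_zero_of_lt hA hjA) (cast_choose_ne_zero_of_lt hB hjB)

lemma natDegree_choosePoly (hA : A < p) (hB : B < p) (hnAB : n ≤ A + B) :
    (choosePoly R A B n).natDegree = min B n := by
  refine le_antisymm (natDegree_le_iff_coeff_eq_zero.mpr fun j hj ↦ ?_)
    (le_natDegree_of_ne_zero (coeff_choosePoly_ne_zero hA hB (min_le_right B n) (by omega)
      (min_le_left B n)))
  rw [coeff_choosePoly]
  split_ifs
  · rw [Nat.choose_eq_zero_of_lt (show B < j by omega), mul_zero, Nat.cast_zero]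
  · rfl

lemma choosePoly_ne_zero (hA : A < p) (hB : B < p) (hnAB : n ≤ A + B) :
    choosePoly R A B n ≠ 0 :=
  fun h ↦ coeff_choosePoly_ne_zero hA hB (min_le_right B n) (by omega) (min_le_left B n)
    (h ▸ coeff_zero _)

lemma rootMultiplicity_zero_choosePoly (hA : A < p) (hB : B < p) (hnAB : n ≤ A + B) :
    rootMultiplicity 0 (choosePoly R A B n) = n - A := by
  refine rootMultiplicity_eq_of_coeff_taylor (fun i hi ↦ ?_) ?_ <;> rw [taylor_zero]
  · rw [coeff_choosePoly, if_pos (by omega), Nat.choose_eq_zero_of_lt (by omega : A < n - i),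
      zero_mul, Nat.cast_zero]
  · exact coeff_choosePoly_ne_zero hA hB (by omega) (by omega) (by omega)

-- For `i < A + B + 1 - p` the upper index of `C(A + B - i, n - i)` is `p + (A + B - p - i)` with
-- `A + B - p - i < n - i < p`.
lemma rootMultiplicity_one_choosePoly (hA : A < p) (hB : B < p) (hn : n < p)
    (hnAB : n ≤ A + B) (hABn : A + B < p + n) :
    rootMultiplicity 1 (choosePoly R A B n) = A + B + 1 - p := by
  refine rootMultiplicity_eq_of_coeff_taylor (fun i hi ↦ ?_) ?_
  · rw [taylor_one_coeff_choosePoly, sum_range_choose_mul_choose_mul_choose _ _ _ (by omega),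
      (by omega : A + (B - i) = p + (A + B - p - i)), Nat.cast_mul,
      cast_add_choose_of_lt _ (by omega : n - i < p),
      Nat.choose_eq_zero_of_lt (by omega : A + B - p - i < n - i), Nat.cast_zero, mul_zero]
  · rw [taylor_one_coeff_choosePoly, sum_range_choose_mul_choose_mul_choose _ _ _ (by omega),
      Nat.cast_mul]
    exact mul_ne_zero (cast_choose_ne_zero_of_lt hB (by omega))
      (cast_choose_ne_zero_of_lt (by omega : A + (B - (A + B + 1 - p)) < p) (by omega))

end choosePoly

theorem ncard_setOf_isRoot_choosePoly {k : Type*} [Field k] [IsAlgClosed k] {p : ℕ}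
    [Fact p.Prime] [CharP k p] {A B n : ℕ} (hA : A < p) (hB : B < p) (hn : n < p)
    (hnAB : n ≤ A + B) (hABn : A + B < p + n) :
    {x : k | x ≠ 0 ∧ x ≠ 1 ∧ (choosePoly k A B n).IsRoot x}.ncard + (n - A) + (A + B + 1 - p) =
      min B n := by
  have hF := choosePoly_ne_zero (R := k) hA hB hnAB
  have hdeg := natDegree_choosePoly (R := k) hA hB hnAB
  rw [← rootMultiplicity_zero_choosePoly (R := k) hA hB hnAB,
    ← rootMultiplicity_one_choosePoly (R := k) hA hB hn hnAB hABn, ← hdeg]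
  refine ncard_setOf_isRoot_add_rootMultiplicity hF fun x hx0 hx1 ↦
    rootMultiplicity_le_one_of_hypergeometricOp_eq_zero hF ?_ (hypergeometricOp_choosePoly A B n)
      hx0 hx1
  exact cast_factorial_ne_zero_of_lt (R := k) (by omega)

lemma isRoot_map_hasseInv_iff {p m a2 a3 a4 : ℕ} {k : Type*} [Field k] [CharP k p] (x : k) :
    ((HasseInv p m a2 a3 a4).map (ZMod.castHom dvd_rfl k)).IsRoot x ↔
      (choosePoly k ((p - 1) / m * (m - a2)) ((p - 1) / m * (m - a4)) ((p - 1) / m * a3)).IsRoot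
        x := by
  simp [HasseInv, choosePoly, Polynomial.map_sum, eval_finsetSum]

theorem stmt9_general (p m a1 a2 a3 a4 : ℕ) [Fact p.Prime] (hmd : m ∣ p - 1)
    (h1 : 0 < a1 ∧ a1 < m) (h2 : 0 < a2 ∧ a2 < m) (h3 : 0 < a3 ∧ a3 < m)
    (h4 : 0 < a4 ∧ a4 < m) (hsum : a1 + a2 + a3 + a4 = 2 * m)
    (k : Type*) [Field k] [IsAlgClosed k] [CharP k p] :
    ((({lam : k | lam ≠ 0 ∧ lam ≠ 1 ∧
        ((HasseInv p m a2 a3 a4).map (ZMod.castHom dvd_rfl k)).IsRoot lam}).ncard : ℤ) =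
      min ((((p - 1) / m : ℕ) : ℤ) * ((m : ℤ) - (a4 : ℤ))) ((((p - 1) / m : ℕ) : ℤ) * (a3 : ℤ))
        - max ((((p - 1) / m : ℕ) : ℤ) * ((a2 : ℤ) + (a3 : ℤ) - (m : ℤ))) 0
        - max ((((p - 1) / m : ℕ) : ℤ) * ((a1 : ℤ) + (a3 : ℤ) - (m : ℤ))) 0) ∧
    0 < ({lam : k | lam ≠ 0 ∧ lam ≠ 1 ∧
        ((HasseInv p m a2 a3 a4).map (ZMod.castHom dvd_rfl k)).IsRoot lam}).ncard := by
  simp only [isRoot_map_hasseInv_iff]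
  set α := (p - 1) / m
  have hαm : α * m = p - 1 := Nat.div_mul_cancel hmd
  have hp := (Fact.out : p.Prime).two_le
  have hα : 0 < α := Nat.div_pos (Nat.le_of_dvd (by omega) hmd) (by omega)
  have hx : ∀ a, 0 < a ∧ a < m → α ≤ α * a ∧ α * a + α ≤ α * m := fun a ha ↦
    ⟨Nat.le_mul_of_pos_right α ha.1, by simpa [mul_add] using Nat.mul_le_mul_left α ha.2⟩
  have hxsum : α * a1 + α * a2 + α * a3 + α * a4 = 2 * (α * m) := by
    rw [← mul_add, ← mul_add, ← mul_add, hsum]; ring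
  have hx1 := hx a1 h1; have hx2 := hx a2 h2; have hx3 := hx a3 h3; have hx4 := hx a4 h4
  have hcount := ncard_setOf_isRoot_choosePoly (k := k) (A := α * (m - a2))
    (B := α * (m - a4)) (n := α * a3)
  simp only [Nat.mul_sub] at hcount ⊢
  simp only [mul_sub, mul_add]
  have := hcount (by omega) (by omega) (by omega) (by omega) (by omega)
  omega

/-- over an algebraically closed field `k` of characteristic `p`, the number of
`a`-supersingular values (roots of `Φ_a` in `k ∖ {0, 1}`) is
`min(α(m-a4), α a3) - max(α(a2+a3-m), 0) - max(α(a1+a3-m), 0)`, and it is positive. -/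
theorem stmt9 (p m a1 a2 a3 a4 : ℕ) (hp : p.Prime) [Fact p.Prime] (hp2 : 2 < p)
    (hm1 : 1 < m) (hmd : m ∣ p - 1)
    (h1 : 0 < a1 ∧ a1 < m) (h2 : 0 < a2 ∧ a2 < m) (h3 : 0 < a3 ∧ a3 < m)
    (h4 : 0 < a4 ∧ a4 < m) (hsum : a1 + a2 + a3 + a4 = 2 * m)
    (k : Type*) [Field k] [IsAlgClosed k] [CharP k p] :
    ((({lam : k | lam ≠ 0 ∧ lam ≠ 1 ∧
        ((HasseInv p m a2 a3 a4).map (ZMod.castHom dvd_rfl k)).IsRoot lam}).ncard : ℤ) =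
      min ((((p - 1) / m : ℕ) : ℤ) * ((m : ℤ) - (a4 : ℤ))) ((((p - 1) / m : ℕ) : ℤ) * (a3 : ℤ))
        - max ((((p - 1) / m : ℕ) : ℤ) * ((a2 : ℤ) + (a3 : ℤ) - (m : ℤ))) 0
        - max ((((p - 1) / m : ℕ) : ℤ) * ((a1 : ℤ) + (a3 : ℤ) - (m : ℤ))) 0) ∧
    0 < ({lam : k | lam ≠ 0 ∧ lam ≠ 1 ∧
        ((HasseInv p m a2 a3 a4).map (ZMod.castHom dvd_rfl k)).IsRoot lam}).ncard :=
  stmt9_general p m a1 a2 a3 a4 hmd h1 h2 h3 h4 hsum k
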